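/- Let y¹,…,yᵐ be vectors in a real Hilbert space and α_i ∈ (0,2). Then Σ_{i=1}^m ⟨(1/α_i)yⁱ + Σ_{j=i+1}^m yʲ, yⁱ⟩ = Σ_{i=1}^m (1/α_i − 1/2)‖yⁱ‖² + (1/2)‖Σ_{i=1}^m yⁱ‖², and consequently Σ_{i=1}^m ⟨(1/α_i)yⁱ + Σ_{j=i+1}^m yʲ, yⁱ⟩ ≥ (1/ᾱ − 1/2)Σ_{i=1}^m ‖yⁱ‖² ≥ (1/m)(1/ᾱ − 1/2)‖Σ_{i=1}^m yⁱ‖², where ᾱ = max_i α_i. -/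

import Mathlib

/-! Expanding `‖∑ yⁱ‖² = ∑ ‖yⁱ‖² + 2 ∑_{i<j} ⟪yʲ, yⁱ⟫` gives the identity. The bounds then follow from
`1/αᵢ ≥ 1/ᾱ > 1/2` together with `‖∑ yⁱ‖² ≤ (∑ ‖yⁱ‖)² ≤ m ∑ ‖yⁱ‖²`. -/

open RealInnerProductSpace Finset

section
variable {H ι : Type*} [NormedAddCommGroup H] [InnerProductSpace ℝ H]
  [LinearOrder ι] [Fintype ι] [LocallyFiniteOrderTop ι] [LocallyFiniteOrderBot ι]

lemma norm_sum_sq_eq_sum_norm_sq_add_two_mul_sum_Ioi (y : ι → H) :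
    ‖∑ i, y i‖ ^ 2 = ∑ i, ‖y i‖ ^ 2 + 2 * ∑ i, ⟪∑ j ∈ Ioi i, y j, y i⟫ := by
  have hsymm : 2 * ∑ i, ⟪∑ j ∈ Ioi i, y j, y i⟫ = ∑ i, ∑ j ∈ {i}ᶜ, ⟪y j, y i⟫ := by
    rw [← sum_sum_Ioi_add_eq_sum_sum_off_diag, mul_sum]
    refine sum_congr rfl fun i _ => ?_
    rw [sum_inner, mul_sum]
    exact sum_congr rfl fun j _ => by rw [real_inner_comm (y i), two_mul]
  rw [hsymm, ← sum_add_distrib, ← real_inner_self_eq_norm_sq, inner_sum]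
  refine sum_congr rfl fun i _ => ?_
  rw [sum_inner, ← real_inner_self_eq_norm_sq, Fintype.sum_eq_add_sum_compl i]

lemma sum_inner_smul_add_sum_Ioi (c : ι → ℝ) (y : ι → H) :
    ∑ i, ⟪c i • y i + ∑ j ∈ Ioi i, y j, y i⟫ =
      ∑ i, (c i - 1 / 2) * ‖y i‖ ^ 2 + 1 / 2 * ‖∑ i, y i‖ ^ 2 := by
  simp only [inner_add_left, real_inner_smul_left, real_inner_self_eq_norm_sq, sum_add_distrib,
    norm_sum_sq_eq_sum_norm_sq_add_two_mul_sum_Ioi y, sub_mul, sum_sub_distrib, ← mul_sum]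
  ring

end

lemma norm_sum_sq_le_card_mul_sum_norm_sq {E ι : Type*} [SeminormedAddCommGroup E]
    (s : Finset ι) (y : ι → E) : ‖∑ i ∈ s, y i‖ ^ 2 ≤ #s * ∑ i ∈ s, ‖y i‖ ^ 2 :=
  (pow_le_pow_left₀ (norm_nonneg _) (norm_sum_le s y) 2).trans (sq_sum_le_card_mul_sum_sq ..)

theorem sum_identity_and_bounds (H : Type*) [NormedAddCommGroup H] [InnerProductSpace ℝ H]
    (m : ℕ) (hm : 0 < m) (y : Fin m → H) (α : Fin m → ℝ)
    (hα : ∀ i, α i ∈ Set.Ioo (0 : ℝ) 2)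
    (ᾱ : ℝ) (hᾱ : ᾱ = Finset.univ.sup' (Finset.univ_nonempty_iff.mpr ⟨⟨0, hm⟩⟩) α) :
    (∑ i, ⟪(1 / α i) • y i + ∑ j ∈ Finset.Ioi i, y j, y i⟫ =
        ∑ i, (1 / α i - 1 / 2) * ‖y i‖ ^ 2 + (1 / 2) * ‖∑ i, y i‖ ^ 2) ∧
      (∑ i, ⟪(1 / α i) • y i + ∑ j ∈ Finset.Ioi i, y j, y i⟫ ≥
        (1 / ᾱ - 1 / 2) * ∑ i, ‖y i‖ ^ 2) ∧
      ((1 / ᾱ - 1 / 2) * ∑ i, ‖y i‖ ^ 2 ≥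
        (1 / (m : ℝ)) * (1 / ᾱ - 1 / 2) * ‖∑ i, y i‖ ^ 2) := by
  have hle : ∀ i, α i ≤ ᾱ := fun i => hᾱ ▸ le_sup' α (mem_univ i)
  have hᾱ_pos : 0 < ᾱ := (hα ⟨0, hm⟩).1.trans_le (hle _)
  have hᾱ_lt : ᾱ < 2 := hᾱ ▸ (sup'_lt_iff _).2 fun i _ => (hα i).2
  have hc : 0 ≤ 1 / ᾱ - 1 / 2 := sub_nonneg.2 (one_div_le_one_div_of_le hᾱ_pos hᾱ_lt.le)
  have hid := sum_inner_smul_add_sum_Ioi (fun i => 1 / α i) y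
  refine ⟨hid, ?_, ?_⟩
  · have hcoeff : ∀ i ∈ univ, (1 / ᾱ - 1 / 2) * ‖y i‖ ^ 2 ≤ (1 / α i - 1 / 2) * ‖y i‖ ^ 2 :=
      fun i _ => by gcongr; exacts [(hα i).1, hle i]
    rw [hid, ge_iff_le, mul_sum]
    exact le_add_of_le_of_nonneg (sum_le_sum hcoeff) (by positivity)
  · have hcard := norm_sum_sq_le_card_mul_sum_norm_sq univ y
    rw [card_univ, Fintype.card_fin] at hcard
    calc 1 / (m : ℝ) * (1 / ᾱ - 1 / 2) * ‖∑ i, y i‖ ^ 2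
        ≤ 1 / (m : ℝ) * (1 / ᾱ - 1 / 2) * (m * ∑ i, ‖y i‖ ^ 2) := by gcongr
      _ = (1 / ᾱ - 1 / 2) * ∑ i, ‖y i‖ ^ 2 := by field_simp
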